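/- Let G be a connected plane (multi)graph with dual G*. Then G is ℤ/3-flow-critical if and only if G* is 4-critical. Consequently, Euler's formula together with the bound |E(F)| ≥ (5/3)|V(F)| for ℤ/3-flow-critical F ≠ K₂, K₄ implies every n-vertex 4-critical planar graph other than K₄ has at most 2.5(n-2) edges. -/

import Mathlib

open Finset

/-- A multigraph with a fixed orientation of its edges: each edge has a
tail and a head. -/
structure MultiGraph where
  V : Type
  E : Type
  [fV : Fintype V]
  [fE : Fintype E]
  [dV : DecidableEq V]
  [dE : DecidableEq E]
  tail : E → V
  head : E → V

namespace MultiGraph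

attribute [instance] fV fE dV dE

variable (G : MultiGraph)

/-- The incidence sign `[v,e]`: `1` if `e` is oriented towards `v`, `-1` if
oriented away from `v`, `0` otherwise (so `0` on loops). -/
def sign (v : G.V) (e : G.E) : ℤ :=
  (if G.head e = v then 1 else 0) - (if G.tail e = v then 1 else 0)

/-- A flow with values in an abelian group: conservation at every vertex. -/
def IsFlow {A : Type*} [AddCommGroup A] (φ : G.E → A) : Prop :=
  ∀ v : G.V, ∑ e : G.E, G.sign v e • φ e = 0

/-- A nowhere-zero flow. -/
def IsNZFlow {A : Type*} [AddCommGroup A] (φ : G.E → A) : Prop :=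
  G.IsFlow φ ∧ ∀ e : G.E, φ e ≠ 0

/-- `G` admits a nowhere-zero `A`-flow. -/
def HasNZFlow (A : Type*) [AddCommGroup A] : Prop :=
  ∃ φ : G.E → A, G.IsNZFlow φ

/-- Two vertices are joined by an edge (in either direction). -/
def Adj (a b : G.V) : Prop :=
  ∃ e : G.E, (G.tail e = a ∧ G.head e = b) ∨ (G.tail e = b ∧ G.head e = a)

/-- `G` is connected. -/
def Connected : Prop :=
  Nonempty G.V ∧ ∀ a b : G.V, Relation.ReflTransGen G.Adj a b

/-- Contraction of a set of edges: the contracted edges are removed and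
their endpoints identified. -/
noncomputable def contract (S : Set G.E) : MultiGraph := by
  classical
  exact
  { V := Quot (fun a b : G.V => ∃ e ∈ S, G.tail e = a ∧ G.head e = b)
    E := {e : G.E // e ∉ S}
    fV := Fintype.ofSurjective (Quot.mk _) (Quot.mk_surjective)
    tail := fun e => Quot.mk _ (G.tail e.1)
    head := fun e => Quot.mk _ (G.head e.1) }

/-- `G` is `A`-flow-critical: `G` is connected, has no nowhere-zero `A`-flow,
but every single-edge contraction does. -/
noncomputable def FlowCritical (A : Type*) [AddCommGroup A] : Prop :=
  G.Connected ∧ ¬ G.HasNZFlow A ∧ ∀ e : G.E, (G.contract {e}).HasNZFlow A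

/-- The degree of a vertex (loops counted twice). -/
def degree (v : G.V) : ℕ :=
  (univ.filter fun e : G.E => G.tail e = v).card +
    (univ.filter fun e : G.E => G.head e = v).card

/-- Incidence of a vertex and an edge. -/
def Incident (v : G.V) (e : G.E) : Prop := G.tail e = v ∨ G.head e = v

/-- The vector `δ_v ∈ (ℤ/3)^{E(G)}`, `δ_v(e) = [v,e]`. -/
def deltaV (v : G.V) : G.E → ZMod 3 := fun e => (G.sign v e : ZMod 3)

/-- The vector `δ_{v,e₁,e₂}`: `[v,e₁]` on `e₁`, `-[v,e₂]` on `e₂`, `0` elsewhere. -/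
def deltaPair (v : G.V) (e₁ e₂ : G.E) : G.E → ZMod 3 := fun e =>
  if e = e₁ then (G.sign v e₁ : ZMod 3)
  else if e = e₂ then -(G.sign v e₂ : ZMod 3) else 0

/-- The dot product on `(ℤ/3)^{E(G)}`. -/
def dot (c φ : G.E → ZMod 3) : ZMod 3 := ∑ e : G.E, c e * φ e

/-- The subspace `Δ_v`: the span of `δ_v` if `deg v ≠ 3`, and the span of `δ_v`
together with the vectors `δ_{v,e₁,e₂}` for incident edges if `deg v = 3`. -/
def DeltaSub (v : G.V) : Submodule (ZMod 3) (G.E → ZMod 3) :=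
  if G.degree v = 3 then
    Submodule.span (ZMod 3) ({G.deltaV v} ∪
      {x | ∃ e₁ e₂ : G.E, e₁ ≠ e₂ ∧ G.Incident v e₁ ∧ G.Incident v e₂ ∧
        x = G.deltaPair v e₁ e₂})
  else Submodule.span (ZMod 3) {G.deltaV v}

/-- Isomorphism of multigraphs (edges may be reversed, since the orientation
is an arbitrary fixed choice). -/
def Iso (G H : MultiGraph) : Prop :=
  ∃ (f : G.V ≃ H.V) (g : G.E ≃ H.E), ∀ e : G.E,
    (H.tail (g e) = f (G.tail e) ∧ H.head (g e) = f (G.head e)) ∨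
    (H.tail (g e) = f (G.head e) ∧ H.head (g e) = f (G.tail e))

/-- The graph with two vertices joined by `m` parallel edges. -/
def banana (m : ℕ) : MultiGraph where
  V := Bool
  E := Fin m
  tail := fun _ => false
  head := fun _ => true

/-- The wheel `W_k`: a cycle on `k` vertices plus a hub (`none`) adjacent to all
of them.  `Sum.inl` are the cycle edges, `Sum.inr` the spokes. -/
def wheel (k : ℕ) : MultiGraph where
  V := Option (Fin k)
  E := Fin k ⊕ Fin k
  tail := fun e => Sum.elim (fun i => some i) (fun i => some i) e
  head := fun e => Sum.elim (fun i => some (finRotate k i)) (fun _ => none) e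

/-- `K₂`. -/
def K2 : MultiGraph := banana 1

/-- `K₄` (the wheel on `3 + 1` vertices). -/
def K4 : MultiGraph := wheel 3

/-- `G` is a wheel. -/
def IsWheel : Prop := ∃ k : ℕ, 3 ≤ k ∧ Iso G (wheel k)

end MultiGraph
namespace MultiGraph

/-- Deletion of a set of edges. -/
noncomputable def deleteEdges (G : MultiGraph) (S : Set G.E) : MultiGraph := by
  classical
  exact
  { V := G.V
    E := {e : G.E // e ∉ S}
    tail := fun e => G.tail e.1
    head := fun e => G.head e.1 }

/-- Proper 3-colorability. -/
def Colorable3 (G : MultiGraph) : Prop :=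
  ∃ f : G.V → Fin 3, ∀ e : G.E, f (G.tail e) ≠ f (G.head e)

/-- The subgraph of `G` with vertex set `SV` and edge set `SE`. -/
noncomputable def subgraph (G : MultiGraph) (SV : Set G.V) (SE : Set G.E)
    (hSE : ∀ e ∈ SE, G.tail e ∈ SV ∧ G.head e ∈ SV) : MultiGraph := by
  classical
  exact
  { V := SV
    E := SE
    tail := fun e => ⟨G.tail e.1, (hSE e.1 e.2).1⟩
    head := fun e => ⟨G.head e.1, (hSE e.1 e.2).2⟩ }

/-- `G` is 4-critical: not 3-colorable, but every proper subgraph is. -/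
def FourCritical (G : MultiGraph) : Prop :=
  ¬ G.Colorable3 ∧
  ∀ (SV : Set G.V) (SE : Set G.E)
    (hSE : ∀ e ∈ SE, G.tail e ∈ SV ∧ G.head e ∈ SV),
    (SV ≠ Set.univ ∨ SE ≠ Set.univ) → (G.subgraph SV SE hSE).Colorable3

/-- A connected plane multigraph `G` together with its dual `D`: they share
the edge set (via `eEquiv`), both are connected, Euler's formula holds, and
Tutte's duality holds for all edge subsets (deleting edges in the dual
corresponds to contracting them in `G`). -/
structure PlaneDualPair where
  G : MultiGraph
  D : MultiGraph
  eEquiv : G.E ≃ D.E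
  conn : G.Connected
  connD : D.Connected
  euler : Fintype.card G.V + Fintype.card D.V = Fintype.card G.E + 2
  tutte : ∀ S : Set G.E,
    (D.deleteEdges (eEquiv '' S)).Colorable3 ↔ (G.contract S).HasNZFlow (ZMod 3)

end MultiGraph

/-!
Tutte's duality turns deleting an edge of `G*` into contracting it in `G`, so `G*` is 4-critical
exactly when `G` is `ℤ/3`-flow-critical.

For the edge bound, flow-criticality of `G` means that every edge `f` is the only zero of some
`ℤ/3`-flow `φ_f`. Pairing with these flows shows that the vertex cuts `δ_v` (`v ≠ v₀`),
together with one vector `δ_{w,e₁,e₂}` at each vertex `w ≠ v₀` of degree 3, are linearly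
independent in `(ℤ/3)^E`, so `n - 1 + n₃ ≤ m`. As all degrees are at least 3, this gives
`3m ≥ 5n` unless `G` is cubic with `n ≤ 4`, or the family is a basis. In the latter case, pairing
the `φ_f` with the basis shows that every edge has an endpoint of degree 3 and that a vertex of
degree 3 has at most one edge to a vertex of larger degree; counting then leaves only
`(n, m) = (5, 8)`. The cubic graph on two vertices has a nowhere-zero `ℤ/3`-flow, so the cubic
case leaves only `(n, m) = (4, 6)`.

By Euler's formula, `3m ≥ 5|V(G)|` is the bound `2m + 10 ≤ 5|V(G*)|`. The exceptions correspond
to a simple 4-critical `G*` with 4 vertices and 6 edges, which is `K₄`, or with 5 vertices and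
8 edges, which cannot exist because such a graph is 3-colourable.
-/

namespace MultiGraph

open Matrix

variable {G D : MultiGraph}

def Loopless (G : MultiGraph) : Prop := ∀ e : G.E, G.tail e ≠ G.head e

def ends (G : MultiGraph) (e : G.E) : Sym2 G.V := s(G.tail e, G.head e)

def incidenceFinset (G : MultiGraph) (v : G.V) : Finset G.E :=
  univ.filter fun e => G.tail e = v ∨ G.head e = v

theorem incident_iff_mem_ends {v : G.V} {e : G.E} : G.Incident v e ↔ v ∈ G.ends e := by
  simp [Incident, ends, eq_comm]

theorem mem_incidenceFinset {v : G.V} {e : G.E} :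
    e ∈ G.incidenceFinset v ↔ G.Incident v e := by
  simp [incidenceFinset, Incident]

theorem card_incidenceFinset (hG : G.Loopless) (v : G.V) :
    (G.incidenceFinset v).card = G.degree v := by
  rw [incidenceFinset, Finset.filter_or, Finset.card_union_of_disjoint, degree]
  exact Finset.disjoint_filter.2 fun e _ ht hh => hG e (ht.trans hh.symm)

theorem sum_degree_eq_twice_card_edges : ∑ v, G.degree v = 2 * Fintype.card G.E := by
  simp only [degree, Finset.sum_add_distrib, ← Finset.card_eq_sum_card_fiberwise
    (fun e _ => Finset.mem_univ (G.tail e)), ← Finset.card_eq_sum_card_fiberwise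
    (fun e _ => Finset.mem_univ (G.head e)), Finset.card_univ]
  ring

theorem Adj.exists_ends_eq {a b : G.V} (h : G.Adj a b) : ∃ e, G.ends e = s(a, b) := by
  obtain ⟨e, ⟨rfl, rfl⟩ | ⟨rfl, rfl⟩⟩ := h
  exacts [⟨e, rfl⟩, ⟨e, Sym2.eq_swap⟩]

theorem Connected.exists_boundary_edge (hG : G.Connected) (P : G.V → Prop) {a b : G.V}
    (ha : P a) (hb : ¬ P b) : ∃ e x y, P x ∧ ¬ P y ∧ G.ends e = s(x, y) := by
  induction hG.2 a b with
  | refl => exact absurd ha hb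
  | @tail c d _ hcd ih =>
    by_cases hc : P c
    · obtain ⟨e, he⟩ := Adj.exists_ends_eq hcd
      exact ⟨e, c, d, hc, hb, he⟩
    · exact ih hc

theorem sign_eq_zero_of_not_incident {v : G.V} {e : G.E} (h : ¬ G.Incident v e) :
    G.sign v e = 0 := by
  simp only [Incident, not_or] at h
  simp [sign, h.1, h.2]

theorem sign_eq_zero_of_tail_eq_head {v : G.V} {e : G.E} (h : G.tail e = G.head e) :
    G.sign v e = 0 := by
  simp [sign, h]

theorem sign_tail {e : G.E} (h : G.tail e ≠ G.head e) : G.sign (G.tail e) e = -1 := by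
  simp [sign, Ne.symm h]

theorem sign_head {e : G.E} (h : G.tail e ≠ G.head e) : G.sign (G.head e) e = 1 := by
  simp [sign, h]

theorem sign_ne_zero (hG : G.Loopless) {v : G.V} {e : G.E} (h : G.Incident v e) :
    (G.sign v e : ZMod 3) ≠ 0 := by
  rcases h with rfl | rfl
  · rw [sign_tail (hG e)]
    decide
  · rw [sign_head (hG e)]
    decide

/-! ### Contracting edges -/

section Contraction

variable (S : Set G.E)

def contractMk (v : G.V) : (G.contract S).V := Quot.mk _ v

open Classical in
noncomputable def contractClass (v : G.V) : Finset G.V :=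
  univ.filter fun x => G.contractMk S x = G.contractMk S v

theorem contract_tail (e : (G.contract S).E) :
    (G.contract S).tail e = G.contractMk S (G.tail e.1) := rfl

theorem contract_head (e : (G.contract S).E) :
    (G.contract S).head e = G.contractMk S (G.head e.1) := rfl

theorem contractMk_surjective : Function.Surjective (G.contractMk S) :=
  Quot.mk_surjective

theorem sum_contract_edges [DecidablePred (· ∈ S)] {M : Type*} [AddCommMonoid M]
    (g : G.E → M) : ∑ e : (G.contract S).E, g e.1 = ∑ e ∈ univ.filter (· ∉ S), g e :=
  (Finset.sum_subtype _ (by simp) g).symm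

theorem contract_sign (v : G.V) (e : (G.contract S).E) :
    (G.contract S).sign (G.contractMk S v) e = ∑ x ∈ G.contractClass S v, G.sign x e.1 := by
  classical
  simp only [sign, contract_head, contract_tail, contractClass, Finset.sum_sub_distrib,
    Finset.sum_ite_eq, Finset.mem_filter, Finset.mem_univ, true_and]
  congr

theorem contract_isFlow_iff {A : Type*} [AddCommGroup A] (ψ : (G.contract S).E → A) :
    (G.contract S).IsFlow ψ ↔
      ∀ v, ∑ x ∈ G.contractClass S v, ∑ e, G.sign x e.1 • ψ e = 0 := by
  simp only [IsFlow, (contractMk_surjective S).forall, contract_sign, Finset.sum_smul]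
  rw [forall_congr' fun v => by rw [Finset.sum_comm]]

end Contraction

theorem contractMk_empty_eq_iff {a b : G.V} :
    G.contractMk ∅ a = G.contractMk ∅ b ↔ a = b := by
  refine ⟨fun h => ?_, congrArg _⟩
  exact eq_equivalence.eqvGen_iff.1 <|
    (Quot.eq.1 h).mono fun x y ⟨e, he, _⟩ => absurd he (Set.notMem_empty e)

theorem contract_empty_isFlow_iff {A : Type*} [AddCommGroup A] (φ : G.E → A) :
    (G.contract ∅).IsFlow (fun e => φ e.1) ↔ G.IsFlow φ := by
  classical
  have hclass (v : G.V) : G.contractClass ∅ v = {v} := by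
    ext x
    simp [contractClass, contractMk_empty_eq_iff]
  rw [contract_isFlow_iff]
  refine forall_congr' fun v => ?_
  rw [hclass, Finset.sum_singleton, sum_contract_edges ∅ fun e => G.sign v e • φ e]
  simp

theorem hasNZFlow_contract_empty_iff {A : Type*} [AddCommGroup A] :
    (G.contract ∅).HasNZFlow A ↔ G.HasNZFlow A := by
  constructor
  · rintro ⟨ψ, hψ, hψ0⟩
    exact ⟨fun e => ψ ⟨e, Set.notMem_empty e⟩, (contract_empty_isFlow_iff _).1 hψ,
      fun e => hψ0 _⟩
  · rintro ⟨φ, hφ, hφ0⟩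
    exact ⟨fun e => φ e.1, (contract_empty_isFlow_iff φ).2 hφ, fun e => hφ0 e.1⟩

theorem contractMk_singleton_eq_iff {f : G.E} {a b : G.V} :
    G.contractMk {f} a = G.contractMk {f} b ↔ a = b ∨ s(a, b) = G.ends f := by
  have hR : Equivalence fun a b : G.V => a = b ∨ s(a, b) = G.ends f := by
    refine ⟨fun a => Or.inl rfl, ?_, ?_⟩
    · rintro a b (rfl | h)
      exacts [Or.inl rfl, Or.inr (Sym2.eq_swap.trans h)]
    · rintro a b c (rfl | h) (rfl | h')
      · exact Or.inl rfl
      · exact Or.inr h'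
      · exact Or.inr h
      · left
        rcases Sym2.eq_iff.1 (h.trans h'.symm) with ⟨h1, h2⟩ | ⟨h1, -⟩
        exacts [h1.trans h2, h1]
  constructor
  · intro h
    refine hR.eqvGen_iff.1 <| (Quot.eq.1 h).mono fun x y ⟨e, he, hx, hy⟩ => Or.inr ?_
    rw [Set.mem_singleton_iff.1 he] at hx hy
    rw [ends, hx, hy]
  · rintro (rfl | h)
    · rfl
    · rcases Sym2.eq_iff.1 h with ⟨rfl, rfl⟩ | ⟨rfl, rfl⟩
      · exact Quot.sound ⟨f, rfl, rfl, rfl⟩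
      · exact (Quot.sound ⟨f, rfl, rfl, rfl⟩).symm

theorem contractClass_singleton_of_not_incident {f : G.E} {v : G.V}
    (hv : ¬ G.Incident v f) : G.contractClass {f} v = {v} := by
  ext x
  simp only [contractClass, Finset.mem_filter, Finset.mem_univ, true_and, Finset.mem_singleton,
    contractMk_singleton_eq_iff]
  refine ⟨fun h => h.resolve_right fun h => hv ?_, Or.inl⟩
  rw [incident_iff_mem_ends, ← h]
  exact Sym2.mem_mk_right x v

theorem contractClass_singleton_tail (f : G.E) :
    G.contractClass {f} (G.tail f) = {G.tail f, G.head f} := by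
  ext x
  simp only [contractClass, Finset.mem_filter, Finset.mem_univ, true_and, Finset.mem_insert,
    Finset.mem_singleton, contractMk_singleton_eq_iff, ends, Sym2.eq_iff]
  tauto

section Extension

variable {A : Type*} {f : G.E}

def extendAt (f : G.E) (ψ : (G.contract {f}).E → A) (c : A) : G.E → A :=
  fun e => if h : e = f then c else ψ ⟨e, h⟩

theorem extendAt_self (ψ : (G.contract {f}).E → A) (c : A) : extendAt f ψ c f = c :=
  dif_pos rfl

theorem extendAt_of_ne (ψ : (G.contract {f}).E → A) (c : A) {e : G.E} (h : e ≠ f) :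
    extendAt f ψ c e = ψ ⟨e, h⟩ :=
  dif_neg h

theorem sum_sign_smul_extendAt [AddCommGroup A] (ψ : (G.contract {f}).E → A) (c : A) (x : G.V) :
    ∑ e, G.sign x e • extendAt f ψ c e =
      G.sign x f • c + ∑ e : (G.contract {f}).E, G.sign x e.1 • ψ e := by
  classical
  have hψ (e : (G.contract {f}).E) : ψ e = extendAt f ψ c e.1 := (extendAt_of_ne ψ c e.2).symm
  rw [← Finset.add_sum_erase _ _ (Finset.mem_univ f), extendAt_self]
  simp only [hψ, sum_contract_edges {f} fun e => G.sign x e • extendAt f ψ c e]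
  exact congrArg _ (Finset.sum_congr (by ext; simp) fun _ _ => rfl)

theorem IsFlow.extendAt [AddCommGroup A] {ψ : (G.contract {f}).E → A}
    (hψ : (G.contract {f}).IsFlow ψ) {c : A}
    (hc : G.tail f = G.head f ∨ c = ∑ e : (G.contract {f}).E, G.sign (G.tail f) e.1 • ψ e) :
    G.IsFlow (extendAt f ψ c) := by
  classical
  let net (x : G.V) : A := ∑ e : (G.contract {f}).E, G.sign x e.1 • ψ e
  have hnet := (contract_isFlow_iff _ ψ).1 hψ
  have hout (x : G.V) (hx : ¬ G.Incident x f) : net x = 0 := by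
    simpa [contractClass_singleton_of_not_incident hx] using hnet x
  have hends : ∑ x ∈ {G.tail f, G.head f}, net x = 0 := by
    simpa [contractClass_singleton_tail] using hnet (G.tail f)
  intro x
  rw [sum_sign_smul_extendAt]
  by_cases hx : G.Incident x f
  · by_cases hl : G.tail f = G.head f
    · rw [sign_eq_zero_of_tail_eq_head hl, zero_smul, zero_add]
      rcases hx with rfl | rfl <;> simpa [hl] using hends
    obtain rfl := hc.resolve_left hl
    rw [Finset.sum_pair hl] at hends
    rcases hx with rfl | rfl
    · simp [sign_tail hl]
    · simpa [sign_head hl] using hends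
  · rw [sign_eq_zero_of_not_incident hx, zero_smul, zero_add]
    exact hout x hx

end Extension

theorem exists_isFlow_vanishing_only_at {A : Type*} [AddCommGroup A] [Nontrivial A]
    (hno : ¬ G.HasNZFlow A) {f : G.E} (hf : (G.contract {f}).HasNZFlow A) :
    G.tail f ≠ G.head f ∧ ∃ φ : G.E → A, G.IsFlow φ ∧ φ f = 0 ∧ ∀ e ≠ f, φ e ≠ 0 := by
  obtain ⟨ψ, hψ, hψ0⟩ := hf
  have hne (c : A) (e : G.E) (he : e ≠ f) : extendAt f ψ c e ≠ 0 := by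
    rw [extendAt_of_ne ψ c he]
    exact hψ0 _
  have hnz (c : A) (hc : c ≠ 0) (hflow : G.IsFlow (extendAt f ψ c)) : False :=
    hno ⟨_, hflow, fun e => by
      by_cases he : e = f
      · rwa [he, extendAt_self]
      · exact hne c e he⟩
  have hl : G.tail f ≠ G.head f := fun hl => by
    obtain ⟨c, hc⟩ := exists_ne (0 : A)
    exact hnz c hc (hψ.extendAt (Or.inl hl))
  have hflow := hψ.extendAt (c := ∑ e : (G.contract {f}).E, G.sign (G.tail f) e.1 • ψ e)
    (Or.inr rfl)
  have hc := not_not.1 fun h => hnz _ h hflow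
  exact ⟨hl, _, hflow, by rw [extendAt_self, hc], hne _⟩

theorem FlowCritical.loopless {A : Type*} [AddCommGroup A] [Nontrivial A]
    (hG : G.FlowCritical A) : G.Loopless :=
  fun f => (exists_isFlow_vanishing_only_at hG.2.1 (hG.2.2 f)).1

theorem FlowCritical.exists_isFlow_vanishing_only_at {A : Type*} [AddCommGroup A]
    [Nontrivial A] (hG : G.FlowCritical A) (f : G.E) :
    ∃ φ : G.E → A, G.IsFlow φ ∧ φ f = 0 ∧ ∀ e ≠ f, φ e ≠ 0 :=
  (MultiGraph.exists_isFlow_vanishing_only_at hG.2.1 (hG.2.2 f)).2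

/-! ### Duality between flow-criticality and 4-criticality -/

theorem colorable3_deleteEdges_empty_iff : (D.deleteEdges ∅).Colorable3 ↔ D.Colorable3 :=
  ⟨fun ⟨c, hc⟩ => ⟨c, fun e => hc ⟨e, Set.notMem_empty e⟩⟩, fun ⟨c, hc⟩ => ⟨c, fun e => hc e.1⟩⟩

theorem FourCritical.exists_coloring (hD : D.FourCritical) {SV : Set D.V} {SE : Set D.E}
    (hSE : ∀ e ∈ SE, D.tail e ∈ SV ∧ D.head e ∈ SV) (hne : SV ≠ Set.univ ∨ SE ≠ Set.univ) :
    ∃ c : D.V → Fin 3, ∀ e ∈ SE, c (D.tail e) ≠ c (D.head e) := by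
  classical
  obtain ⟨c, hc⟩ := hD.2 SV SE hSE hne
  refine ⟨fun v => if h : v ∈ SV then c ⟨v, h⟩ else 0, fun e he => ?_⟩
  simp only [dif_pos (hSE e he).1, dif_pos (hSE e he).2]
  exact hc ⟨e, he⟩

theorem fourCritical_iff (hD : D.Connected) :
    D.FourCritical ↔ ¬ D.Colorable3 ∧ ∀ d, (D.deleteEdges {d}).Colorable3 := by
  refine and_congr_right fun _ => ⟨fun h d => ?_, fun h SV SE hSE hne => ?_⟩
  · obtain ⟨c, hc⟩ := FourCritical.exists_coloring ⟨‹_›, h⟩ (SV := Set.univ) (SE := {d}ᶜ)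
      (fun _ _ => ⟨trivial, trivial⟩) (Or.inr (Set.compl_ne_univ.2 (Set.singleton_nonempty d)))
    exact ⟨c, fun e => hc e.1 e.2⟩
  by_cases hSE' : SE = Set.univ
  · obtain ⟨v, hv⟩ : ∃ v, v ∉ SV := by
      simpa [Set.eq_univ_iff_forall] using hne.resolve_right (not_not.2 hSE')
    refine ⟨fun _ => 0, fun e => absurd ?_ id⟩
    -- `SE` contains every edge, so no edge leaves `SV` and connectivity forces `SV = univ`.
    obtain ⟨ε, x, y, -, hy, hε⟩ := hD.exists_boundary_edge (· ∈ SV) (hSE e.1 e.2).1 hv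
    obtain ⟨ht, hh⟩ := hSE ε (hSE' ▸ Set.mem_univ ε)
    rcases Sym2.mem_iff.1 (hε ▸ Sym2.mem_mk_right x y : y ∈ D.ends ε) with rfl | rfl
    exacts [hy ht, hy hh]
  · obtain ⟨d, hd⟩ : ∃ d, d ∉ SE := by simpa [Set.eq_univ_iff_forall] using hSE'
    obtain ⟨c, hc⟩ := h d
    exact ⟨fun v => c v.1, fun e => hc ⟨e.1, fun h => hd (Set.mem_singleton_iff.1 h ▸ e.2)⟩⟩

theorem PlaneDualPair.flowCritical_iff_fourCritical (P : PlaneDualPair) :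
    P.G.FlowCritical (ZMod 3) ↔ P.D.FourCritical := by
  have hcol : P.D.Colorable3 ↔ P.G.HasNZFlow (ZMod 3) := by
    simpa [colorable3_deleteEdges_empty_iff, hasNZFlow_contract_empty_iff] using P.tutte ∅
  have hdel (e : P.G.E) : (P.D.deleteEdges {P.eEquiv e}).Colorable3 ↔
      (P.G.contract {e}).HasNZFlow (ZMod 3) := by
    simpa using P.tutte {e}
  rw [fourCritical_iff P.connD, FlowCritical, hcol, ← P.eEquiv.forall_congr_right]
  simp only [hdel, P.conn, true_and]

/-! ### Flows over `ℤ/3` and the independence argument -/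

theorem isFlow_iff_deltaV_dotProduct {φ : G.E → ZMod 3} :
    G.IsFlow φ ↔ ∀ v, G.deltaV v ⬝ᵥ φ = 0 := by
  simp [IsFlow, deltaV, dotProduct, zsmul_eq_mul]

theorem IsFlow.deltaV_dotProduct {φ : G.E → ZMod 3} (hφ : G.IsFlow φ) (v : G.V) :
    G.deltaV v ⬝ᵥ φ = 0 :=
  isFlow_iff_deltaV_dotProduct.1 hφ v

theorem IsFlow.smul_sub_smul {φ ψ : G.E → ZMod 3} (hφ : G.IsFlow φ) (hψ : G.IsFlow ψ)
    (a b : ZMod 3) : G.IsFlow (a • φ - b • ψ) :=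
  isFlow_iff_deltaV_dotProduct.2 fun v => by
    simp [dotProduct_sub, dotProduct_smul, hφ.deltaV_dotProduct, hψ.deltaV_dotProduct]

theorem IsFlow.sum_incidenceFinset {φ : G.E → ZMod 3} (hφ : G.IsFlow φ) (v : G.V) :
    ∑ e ∈ G.incidenceFinset v, (G.sign v e : ZMod 3) * φ e = 0 := by
  rw [← hφ.deltaV_dotProduct v]
  refine Finset.sum_subset (Finset.subset_univ _) fun e _ he => ?_
  rw [sign_eq_zero_of_not_incident (mt mem_incidenceFinset.2 he)]
  simp

theorem IsFlow.eq_zero_of_forall_incident_ne (hG : G.Loopless) {φ : G.E → ZMod 3}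
    (hφ : G.IsFlow φ) {v : G.V} {g : G.E} (hg : G.Incident v g)
    (h : ∀ e, G.Incident v e → e ≠ g → φ e = 0) : φ g = 0 := by
  have hsum := hφ.sum_incidenceFinset v
  rw [Finset.sum_eq_single_of_mem g (mem_incidenceFinset.2 hg)
    fun e he hne => by rw [h e (mem_incidenceFinset.1 he) hne, mul_zero]] at hsum
  exact (mul_eq_zero.1 hsum).resolve_left (sign_ne_zero hG hg)

theorem sum_deltaV : ∑ v, G.deltaV v = 0 := by
  funext e
  simp [deltaV, sign, Finset.sum_apply]

theorem sum_smul_deltaV_apply (c : G.V → ZMod 3) (e : G.E) :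
    (∑ v, c v • G.deltaV v) e = c (G.head e) - c (G.tail e) := by
  simp [deltaV, sign, Finset.sum_apply, mul_sub, Finset.sum_sub_distrib]

theorem deltaPair_dotProduct (w : G.V) {a b : G.E} (hab : a ≠ b) (φ : G.E → ZMod 3) :
    G.deltaPair w a b ⬝ᵥ φ = (G.sign w a : ZMod 3) * φ a - (G.sign w b : ZMod 3) * φ b := by
  have (e : G.E) : G.deltaPair w a b e * φ e =
      (if e = a then (G.sign w a : ZMod 3) * φ a else 0) -
        (if e = b then (G.sign w b : ZMod 3) * φ b else 0) := by
    by_cases ha : e = a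
    · subst ha
      simp [deltaPair, hab]
    · by_cases hb : e = b
      · subst hb
        simp [deltaPair, ha]
      · simp [deltaPair, ha, hb]
  simp [dotProduct, this, Finset.sum_sub_distrib]

/-- The property of the vector `δ_{w,e₁,e₂}` at a vertex `w` of degree 3 (see
`exists_detectsZeroAt`) on which the independence argument rests. -/
def DetectsZeroAt (G : MultiGraph) (w : G.V) (x : G.E → ZMod 3) : Prop :=
  (∀ φ, G.IsFlow φ → (∀ e, G.Incident w e → φ e ≠ 0) → x ⬝ᵥ φ = 0) ∧
    ∀ φ f, G.IsFlow φ → G.Incident w f → φ f = 0 → (∀ e ≠ f, φ e ≠ 0) → x ⬝ᵥ φ ≠ 0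

theorem exists_detectsZeroAt (hG : G.Loopless) {w : G.V} (hw : G.degree w = 3) :
    ∃ x, G.DetectsZeroAt w x := by
  rw [← card_incidenceFinset hG, Finset.card_eq_three] at hw
  obtain ⟨a, b, c, hab, hac, hbc, hinc⟩ := hw
  have hmem (e : G.E) : G.Incident w e ↔ e = a ∨ e = b ∨ e = c := by
    rw [← mem_incidenceFinset, hinc]
    simp
  have hs (e : G.E) (he : e = a ∨ e = b ∨ e = c) : (G.sign w e : ZMod 3) ≠ 0 :=
    sign_ne_zero hG ((hmem e).2 he)
  have hsum (φ : G.E → ZMod 3) (hφ : G.IsFlow φ) :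
      G.sign w a * φ a + G.sign w b * φ b + G.sign w c * φ c = 0 := by
    have := hφ.sum_incidenceFinset w
    rwa [hinc, Finset.sum_insert (by simp [hab, hac]), Finset.sum_pair hbc, ← add_assoc] at this
  -- In `ℤ/3`, three nonzero elements with zero sum are equal.
  have key : ∀ x y z : ZMod 3, x + y + z = 0 →
      (x ≠ 0 → y ≠ 0 → z ≠ 0 → x - y = 0) ∧ (x ≠ 0 → z = 0 → x - y ≠ 0) := by decide
  refine ⟨G.deltaPair w a b, fun φ hφ hne => ?_, fun φ f hφ hf hφf hne => ?_⟩
  · rw [deltaPair_dotProduct w hab]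
    refine (key _ _ _ (hsum φ hφ)).1 ?_ ?_ ?_ <;> refine mul_ne_zero (hs _ (by simp)) (hne _ ?_)
    all_goals simp [hmem]
  · rw [deltaPair_dotProduct w hab]
    rcases (hmem f).1 hf with rfl | rfl | rfl
    · simpa [hφf] using mul_ne_zero (hs b (by simp)) (hne b hab.symm)
    · simpa [hφf] using mul_ne_zero (hs a (by simp)) (hne a hab)
    · exact (key _ _ _ (hsum φ hφ)).2 (mul_ne_zero (hs a (by simp)) (hne a hac)) (by simp [hφf])

theorem linearIndependent_deltaV (hG : G.Connected) (v₀ : G.V) :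
    LinearIndependent (ZMod 3) fun v : {v // v ≠ v₀} => G.deltaV v := by
  classical
  rw [Fintype.linearIndependent_iff]
  intro g hg
  let c (v : G.V) : ZMod 3 := if h : v = v₀ then 0 else g ⟨v, h⟩
  have hc (e : G.E) : c (G.head e) = c (G.tail e) := by
    have : ∑ v, c v • G.deltaV v = 0 := by
      rw [Fintype.sum_eq_add_sum_subtype_ne _ v₀]
      simpa [c] using (Finset.sum_congr rfl fun v _ => by simp [v.2]).trans hg
    exact sub_eq_zero.1 ((sum_smul_deltaV_apply c e).symm.trans (congrFun this e))
  have hconst (a b : G.V) (hab : Relation.ReflTransGen G.Adj a b) : c a = c b := by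
    induction hab with
    | refl => rfl
    | tail _ hbc ih =>
      obtain ⟨e, ⟨rfl, rfl⟩ | ⟨rfl, rfl⟩⟩ := hbc
      exacts [ih.trans (hc e).symm, ih.trans (hc e)]
  intro v
  simpa [c, v.2] using hconst v v₀ (hG.2 v v₀)

theorem _root_.card_subtype_ne_sum_add_one {α β : Type*} [Fintype α] [DecidableEq α] [Fintype β]
    (a₀ : α) : Fintype.card ({a // a ≠ a₀} ⊕ β) + 1 = Fintype.card α + Fintype.card β := by
  rw [Fintype.card_sum, Fintype.card_subtype_compl, Fintype.card_subtype_eq]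
  have := Fintype.card_pos_iff.2 ⟨a₀⟩
  omega

section Independence

variable {T : Finset G.V} {x : T → G.E → ZMod 3} {v₀ : G.V}

theorem FlowCritical.eq_zero_of_forall_isFlow (hG : G.FlowCritical (ZMod 3))
    (hx : ∀ w : T, G.DetectsZeroAt w (x w)) (hv₀ : v₀ ∉ T) (g : T → ZMod 3)
    (hg : ∀ φ, G.IsFlow φ → ∑ w, g w * (x w ⬝ᵥ φ) = 0) : g = 0 := by
  by_contra hne
  obtain ⟨w, hw⟩ := Function.ne_iff.1 hne
  -- Test against the flow vanishing only at an edge `ε` leaving the support of `g`.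
  obtain ⟨ε, a, b, ⟨ha, hga⟩, hb, hε⟩ := hG.1.exists_boundary_edge
    (fun z => ∃ hz : z ∈ T, g ⟨z, hz⟩ ≠ 0) ⟨w.2, hw⟩ fun ⟨h, _⟩ => hv₀ h
  have hinc (u : G.V) : G.Incident u ε ↔ u = a ∨ u = b := by
    rw [incident_iff_mem_ends, hε, Sym2.mem_iff]
  obtain ⟨φ, hφ, hφε, hφne⟩ := hG.exists_isFlow_vanishing_only_at ε
  have hsum := hg φ hφ
  rw [Finset.sum_eq_single_of_mem ⟨a, ha⟩ (Finset.mem_univ _) fun u _ hu => ?_] at hsum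
  · exact mul_ne_zero hga ((hx _).2 φ ε hφ ((hinc a).2 (Or.inl rfl)) hφε hφne) hsum
  by_cases hu' : G.Incident u ε
  · have hub : u.1 = b := ((hinc u).1 hu').resolve_left fun h => hu (Subtype.ext h)
    have : g u = 0 := by_contra fun h => hb ⟨hub ▸ u.2, by simpa [← hub] using h⟩
    rw [this, zero_mul]
  · rw [(hx u).1 φ hφ fun e he => hφne e fun h => hu' (h ▸ he), mul_zero]

theorem FlowCritical.linearIndependent_deltaV_sum (hG : G.FlowCritical (ZMod 3))
    (hx : ∀ w : T, G.DetectsZeroAt w (x w)) (hv₀ : v₀ ∉ T) :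
    LinearIndependent (ZMod 3) (Sum.elim (fun v : {v // v ≠ v₀} => G.deltaV v) x) := by
  rw [Fintype.linearIndependent_iff]
  intro g hg
  rw [Fintype.sum_sum_type] at hg
  have hr : g ∘ Sum.inr = 0 := hG.eq_zero_of_forall_isFlow hx hv₀ _ fun φ hφ => by
    simpa [add_dotProduct, sum_dotProduct, hφ.deltaV_dotProduct] using congrArg (· ⬝ᵥ φ) hg
  have hl : g ∘ Sum.inl = 0 := by
    refine funext <| Fintype.linearIndependent_iff.1 (linearIndependent_deltaV hG.1 v₀) _ ?_
    simpa [show ∀ w, g (Sum.inr w) = 0 from congrFun hr] using hg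
  rintro (v | w)
  exacts [congrFun hl v, congrFun hr w]

theorem FlowCritical.card_add_card_le (hG : G.FlowCritical (ZMod 3))
    (hx : ∀ w : T, G.DetectsZeroAt w (x w)) (hv₀ : v₀ ∉ T) :
    Fintype.card G.V + T.card ≤ Fintype.card G.E + 1 := by
  have := (hG.linearIndependent_deltaV_sum hx hv₀).fintype_card_le_finrank
  have := card_subtype_ne_sum_add_one (β := T) v₀
  rw [Module.finrank_fintype_fun_eq_card, Fintype.card_coe] at *
  omega

theorem FlowCritical.eq_zero_of_card_eq (hG : G.FlowCritical (ZMod 3))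
    (hx : ∀ w : T, G.DetectsZeroAt w (x w)) (hv₀ : v₀ ∉ T)
    (hcard : Fintype.card G.V + T.card = Fintype.card G.E + 1) {φ : G.E → ZMod 3}
    (hφ : G.IsFlow φ) (h : ∀ w, x w ⬝ᵥ φ = 0) : φ = 0 := by
  -- By `hcard` the independent family has `|E|` members, so it spans `(ℤ/3)^E`.
  have hspan := (hG.linearIndependent_deltaV_sum hx hv₀).span_eq_top_of_card_eq_finrank' <| by
    have := card_subtype_ne_sum_add_one (β := T) v₀
    rw [Module.finrank_fintype_fun_eq_card, Fintype.card_coe] at *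
    omega
  have hℓ := LinearMap.ext_on_range hspan (f := (dotProductBilin (ZMod 3) (ZMod 3)).flip φ)
    (g := 0) fun i => by rcases i with v | w <;> simp [hφ.deltaV_dotProduct, h]
  funext e
  simpa using LinearMap.congr_fun hℓ (Pi.single e 1)

theorem FlowCritical.tail_mem_or_head_mem_of_card_eq (hG : G.FlowCritical (ZMod 3))
    (hx : ∀ w : T, G.DetectsZeroAt w (x w)) (hv₀ : v₀ ∉ T)
    (hcard : Fintype.card G.V + T.card = Fintype.card G.E + 1) (hE : 2 ≤ Fintype.card G.E)
    (f : G.E) : G.tail f ∈ T ∨ G.head f ∈ T := by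
  by_contra! h
  obtain ⟨φ, hφ, -, hne⟩ := hG.exists_isFlow_vanishing_only_at f
  obtain ⟨e, he⟩ := Fintype.exists_ne_of_one_lt_card hE f
  refine hne e he <| congrFun (hG.eq_zero_of_card_eq hx hv₀ hcard hφ fun w => ?_) e
  refine (hx w).1 φ hφ fun e' he' => hne e' ?_
  rintro rfl
  rcases he' with hw | hw
  exacts [h.1 (hw ▸ w.2), h.2 (hw ▸ w.2)]

theorem FlowCritical.eq_of_ends_eq_of_card_eq (hG : G.FlowCritical (ZMod 3))
    (hx : ∀ w : T, G.DetectsZeroAt w (x w)) (hv₀ : v₀ ∉ T)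
    (hcard : Fintype.card G.V + T.card = Fintype.card G.E + 1) {w : T} {f f' : G.E}
    {y y' : G.V} (hf : G.ends f = s(↑w, y)) (hf' : G.ends f' = s(↑w, y')) (hy : y ∉ T)
    (hy' : y' ∉ T) : f = f' := by
  by_contra hne
  have hoff {g z ψ} (hg : G.ends g = s(↑w, z)) (hz : z ∉ T) (hψ : G.IsFlow ψ)
      (hψne : ∀ e ≠ g, ψ e ≠ 0) (u : T) (hu : u ≠ w) : x u ⬝ᵥ ψ = 0 := by
    refine (hx u).1 ψ hψ fun e he => hψne e ?_
    rintro rfl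
    rw [incident_iff_mem_ends, hg, Sym2.mem_iff] at he
    rcases he with h | h
    exacts [hu (Subtype.ext h), hz (h ▸ u.2)]
  have hw {g z} (hg : G.ends g = s(↑w, z)) : G.Incident w g := by
    rw [incident_iff_mem_ends, hg]
    exact Sym2.mem_mk_left _ _
  obtain ⟨φ, hφ, hφf, hφne⟩ := hG.exists_isFlow_vanishing_only_at f
  obtain ⟨φ', hφ', hφ'f', hφ'ne⟩ := hG.exists_isFlow_vanishing_only_at f'
  have hα := (hx w).2 φ f hφ (hw hf) hφf hφne
  have hα' := (hx w).2 φ' f' hφ' (hw hf') hφ'f' hφ'ne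
  -- This combination of `φ` and `φ'` is orthogonal to every `x u`, hence zero, but not at `f'`.
  have hχ := hG.eq_zero_of_card_eq hx hv₀ hcard
    (hφ.smul_sub_smul hφ' (x w ⬝ᵥ φ') (x w ⬝ᵥ φ)) fun u => by
      by_cases hu : u = w
      · subst hu
        simp only [dotProduct_sub, dotProduct_smul, smul_eq_mul]
        ring
      · simp [dotProduct_sub, dotProduct_smul, hoff hf hy hφ hφne u hu,
          hoff hf' hy' hφ' hφ'ne u hu]
  have := congrFun hχ f'
  simp only [Pi.sub_apply, Pi.smul_apply, smul_eq_mul, hφ'f', mul_zero, sub_zero,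
    Pi.zero_apply] at this
  exact mul_ne_zero hα' (hφne f' (Ne.symm hne)) this

end Independence

/-! ### The edge bound for flow-critical graphs -/

theorem sum_degree_compl_le_card (T : Finset G.V) (h1 : ∀ f, G.tail f ∈ T ∨ G.head f ∈ T)
    (h2 : ∀ w ∈ T, ∀ f f' y y', G.ends f = s(w, y) → G.ends f' = s(w, y') → y ∉ T → y' ∉ T →
      f = f') :
    ∑ v ∈ Tᶜ, G.degree v ≤ T.card := by
  let X := univ.filter fun e => G.tail e ∉ T ∨ G.head e ∉ T
  have hX : ∑ v ∈ Tᶜ, G.degree v = X.card := by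
    simp only [degree, Finset.sum_add_distrib, Finset.sum_card_fiberwise_eq_card_filter,
      Finset.mem_compl, X, Finset.filter_or]
    rw [Finset.card_union_of_disjoint]
    exact Finset.disjoint_filter.2 fun e _ ht hh => (h1 e).elim ht hh
  let τ (e : G.E) : G.V := if G.tail e ∈ T then G.tail e else G.head e
  have hτ (e : G.E) (he : e ∈ X) : τ e ∈ T ∧ ∃ y ∉ T, G.ends e = s(τ e, y) := by
    simp only [X, Finset.mem_filter, Finset.mem_univ, true_and] at he
    by_cases ht : G.tail e ∈ T
    · simpa [τ, ht] using ⟨G.head e, he.resolve_left (not_not.2 ht), rfl⟩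
    · simpa [τ, ht] using ⟨(h1 e).resolve_left ht, G.tail e, ht, Sym2.eq_swap⟩
  rw [hX]
  refine Finset.card_le_card_of_injOn τ (fun e he => (hτ e he).1) fun e he e' he' hee' => ?_
  obtain ⟨hw, y, hy, hey⟩ := hτ e he
  obtain ⟨-, y', hy', hey'⟩ := hτ e' he'
  exact h2 _ hw e e' y y' hey (hee' ▸ hey') hy hy'

theorem FlowCritical.three_le_degree (hG : G.FlowCritical (ZMod 3)) (hE : 2 ≤ Fintype.card G.E)
    (v : G.V) : 3 ≤ G.degree v := by
  have hl := hG.loopless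
  rw [← card_incidenceFinset hl]
  by_contra! h
  obtain ⟨g, hg⟩ : ∃ g, G.Incident v g := by
    obtain ⟨e₀⟩ := Fintype.card_pos_iff.1 (by omega : 0 < Fintype.card G.E)
    have hne : G.tail e₀ ≠ v ∨ G.head e₀ ≠ v := by
      by_contra! h'
      exact hl e₀ (h'.1.trans h'.2.symm)
    obtain ⟨ε, a, b, rfl, -, hε⟩ := hne.elim (hG.1.exists_boundary_edge (· = v) rfl)
      (hG.1.exists_boundary_edge (· = v) rfl)
    exact ⟨ε, incident_iff_mem_ends.2 (hε ▸ Sym2.mem_mk_left _ _)⟩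
  have hgm := mem_incidenceFinset.2 hg
  obtain ⟨e', hne, hsub⟩ : ∃ e', e' ≠ g ∧ G.incidenceFinset v ⊆ {g, e'} := by
    rcases (by have := Finset.card_pos.2 ⟨g, hgm⟩; omega :
      (G.incidenceFinset v).card = 1 ∨ (G.incidenceFinset v).card = 2) with h1 | h2
    · obtain ⟨e', he'⟩ := Fintype.exists_ne_of_one_lt_card hE g
      obtain ⟨a, ha⟩ := Finset.card_eq_one.1 h1
      rw [ha, Finset.mem_singleton] at hgm
      exact ⟨e', he', by simp [ha, hgm]⟩
    · obtain ⟨a, b, hab, hab'⟩ := Finset.card_eq_two.1 h2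
      rw [hab', Finset.mem_insert, Finset.mem_singleton] at hgm
      rcases hgm with rfl | rfl
      exacts [⟨b, hab.symm, hab'.le⟩, ⟨a, hab, hab' ▸ Finset.pair_comm a g ▸ subset_rfl⟩]
  obtain ⟨φ, hφ, hφe', hφne⟩ := hG.exists_isFlow_vanishing_only_at e'
  refine hφne g hne.symm (hφ.eq_zero_of_forall_incident_ne hl hg fun e he heg => ?_)
  have := hsub (mem_incidenceFinset.2 he)
  rw [Finset.mem_insert, Finset.mem_singleton] at this
  exact this.elim (absurd · heg) (· ▸ hφe')

theorem hasNZFlow_of_card_eq_two (hl : G.Loopless) (hV : Fintype.card G.V = 2)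
    (hE : Fintype.card G.E = 3) : G.HasNZFlow (ZMod 3) := by
  obtain ⟨v₀, v₁, h01, huniv⟩ := Finset.card_eq_two.1 hV
  have hmem (v : G.V) : v = v₀ ∨ v = v₁ := by
    simpa [huniv] using Finset.mem_univ v
  have hinc (e : G.E) : G.Incident v₀ e := by
    rcases hmem (G.tail e) with h | h
    · exact Or.inl h
    · exact Or.inr ((hmem _).resolve_right fun h' => hl e (h.trans h'.symm))
  have hne (e : G.E) : G.deltaV v₀ e ≠ 0 := sign_ne_zero hl (hinc e)
  have h1 : G.deltaV v₁ = -G.deltaV v₀ := by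
    rw [eq_neg_iff_add_eq_zero, add_comm, ← Finset.sum_pair h01, ← huniv, sum_deltaV]
  have h0 : G.deltaV v₀ ⬝ᵥ G.deltaV v₀ = 0 := by
    have hsq : ∀ a : ZMod 3, a ≠ 0 → a * a = 1 := by decide
    simp only [dotProduct, fun e => hsq _ (hne e), Finset.sum_const, Finset.card_univ, hE]
    decide
  refine ⟨G.deltaV v₀, isFlow_iff_deltaV_dotProduct.2 fun v => ?_, hne⟩
  rcases hmem v with rfl | rfl
  · exact h0
  · rw [h1, neg_dotProduct, h0, neg_zero]

theorem FlowCritical.card_eq_of_forall_degree_eq_three (hG : G.FlowCritical (ZMod 3))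
    (hcub : ∀ v, G.degree v = 3) : Fintype.card G.V = 4 ∧ Fintype.card G.E = 6 := by
  obtain ⟨v₀⟩ := hG.1.1
  choose x hx using fun w : univ.erase v₀ => exists_detectsZeroAt hG.loopless (hcub w)
  have hle := hG.card_add_card_le hx (Finset.notMem_erase v₀ univ)
  rw [Finset.card_erase_of_mem (Finset.mem_univ _), Finset.card_univ] at hle
  have hsum := sum_degree_eq_twice_card_edges (G := G)
  simp only [hcub, Finset.sum_const, Finset.card_univ, smul_eq_mul] at hsum
  have hn := Fintype.card_pos_iff.2 hG.1.1
  rcases (by omega : Fintype.card G.V = 2 ∨ Fintype.card G.V = 4) with h2 | h4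
  · exact absurd (hasNZFlow_of_card_eq_two hG.loopless h2 (by omega)) hG.2.1
  · omega

theorem FlowCritical.five_mul_card_le_of_degree_ne_three (hG : G.FlowCritical (ZMod 3))
    (hE : 2 ≤ Fintype.card G.E) {v₀ : G.V} (hv₀ : G.degree v₀ ≠ 3) :
    5 * Fintype.card G.V ≤ 3 * Fintype.card G.E ∨
      (Fintype.card G.V = 5 ∧ Fintype.card G.E = 8) := by
  classical
  set T := univ.filter (G.degree · = 3)
  have hv₀T : v₀ ∉ T := by simpa [T] using hv₀
  choose x hx using fun w : T => exists_detectsZeroAt hG.loopless (Finset.mem_filter.1 w.2).2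
  have hle := hG.card_add_card_le hx hv₀T
  have hT : ∑ v ∈ T, G.degree v = 3 * T.card := by
    rw [Finset.sum_congr rfl fun v hv => (Finset.mem_filter.1 hv).2, Finset.sum_const,
      smul_eq_mul, mul_comm]
  have hTc : 4 * Tᶜ.card ≤ ∑ v ∈ Tᶜ, G.degree v := by
    rw [mul_comm, ← smul_eq_mul]
    refine Finset.card_nsmul_le_sum _ _ _ fun v hv => ?_
    have := hG.three_le_degree hE v
    have : G.degree v ≠ 3 := by simpa [T] using hv
    omega
  have hsum := sum_degree_eq_twice_card_edges (G := G)
  have hsplit := Finset.sum_add_sum_compl T G.degree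
  have hcard := Finset.card_add_card_compl T
  have hv₀c : 1 ≤ Tᶜ.card := Finset.card_pos.2 ⟨v₀, Finset.mem_compl.2 hv₀T⟩
  -- As `2m = 3|T| + ∑_{v ∉ T} deg v`, the bound `n + |T| ≤ m` would already give `5n ≤ 3m`.
  by_cases htight : Fintype.card G.V + T.card = Fintype.card G.E + 1
  · have := sum_degree_compl_le_card T
      (hG.tail_mem_or_head_mem_of_card_eq hx hv₀T htight hE)
      fun w hw f f' y y' hf hf' hy hy' =>
        hG.eq_of_ends_eq_of_card_eq hx hv₀T htight (w := ⟨w, hw⟩) hf hf' hy hy'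
    omega
  · omega

theorem FlowCritical.five_mul_card_le_three_mul_card_or (hG : G.FlowCritical (ZMod 3))
    (hE : 2 ≤ Fintype.card G.E) :
    5 * Fintype.card G.V ≤ 3 * Fintype.card G.E ∨
      (Fintype.card G.V = 4 ∧ Fintype.card G.E = 6) ∨
      (Fintype.card G.V = 5 ∧ Fintype.card G.E = 8) := by
  by_cases hcub : ∀ v, G.degree v = 3
  · exact Or.inr (Or.inl (hG.card_eq_of_forall_degree_eq_three hcub))
  obtain ⟨v₀, hv₀⟩ := not_forall.1 hcub
  exact (hG.five_mul_card_le_of_degree_ne_three hE hv₀).imp_right Or.inr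

/-! ### Small 4-critical graphs -/

theorem FourCritical.injective_ends (hD : D.FourCritical) : Function.Injective D.ends := by
  intro d d' h
  by_contra hne
  obtain ⟨c, hc⟩ := hD.exists_coloring (SV := Set.univ) (SE := {d'}ᶜ)
    (fun _ _ => ⟨trivial, trivial⟩) (Or.inr (Set.compl_ne_univ.2 (Set.singleton_nonempty d')))
  refine hD.1 ⟨c, fun e => ?_⟩
  by_cases he : e = d'
  · subst he
    rcases Sym2.eq_iff.1 h with ⟨h1, h2⟩ | ⟨h1, h2⟩
    · rw [← h1, ← h2]
      exact hc d hne
    · rw [← h1, ← h2]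
      exact (hc d hne).symm
  · exact hc e he

def toSimpleGraph (D : MultiGraph) : SimpleGraph D.V := SimpleGraph.fromEdgeSet (Set.range D.ends)

noncomputable instance : DecidableRel D.toSimpleGraph.Adj := Classical.decRel _

theorem toSimpleGraph_adj {v w : D.V} (e : D.E) (he : D.ends e = s(v, w)) (hvw : v ≠ w) :
    D.toSimpleGraph.Adj v w :=
  (SimpleGraph.fromEdgeSet_adj _).2 ⟨⟨e, he⟩, hvw⟩

theorem colorable3_of_colorable_toSimpleGraph (hl : D.Loopless)
    (h : D.toSimpleGraph.Colorable 3) : D.Colorable3 := by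
  obtain ⟨C⟩ := h
  exact ⟨C, fun e => C.valid (toSimpleGraph_adj e rfl (hl e))⟩

theorem card_edgeFinset_toSimpleGraph (hl : D.Loopless) (hinj : Function.Injective D.ends) :
    D.toSimpleGraph.edgeFinset.card = Fintype.card D.E := by
  have hset : D.toSimpleGraph.edgeSet = Set.range D.ends := by
    rw [toSimpleGraph, SimpleGraph.edgeSet_fromEdgeSet, sdiff_eq_left, Set.disjoint_left]
    rintro _ ⟨e, rfl⟩
    exact Sym2.mk_isDiag_iff.not.2 (hl e)
  calc D.toSimpleGraph.edgeFinset.card = Fintype.card D.toSimpleGraph.edgeSet :=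
        Set.toFinset_card _
    _ = Fintype.card (Set.range D.ends) := Fintype.card_congr (Equiv.setCongr hset)
    _ = Fintype.card D.E := Set.card_range_of_injective hinj

theorem FourCritical.three_le_degree (hD : D.FourCritical) (hl : D.Loopless) (v : D.V) :
    3 ≤ D.toSimpleGraph.degree v := by
  classical
  by_contra! h
  obtain ⟨c, hc⟩ := hD.exists_coloring (SV := {v}ᶜ) (SE := {e | ¬ D.Incident v e})
    (fun e he => by simpa [Incident, not_or, eq_comm] using he)
    (Or.inl (Set.compl_ne_univ.2 (Set.singleton_nonempty v)))
  obtain ⟨k, -, hk⟩ := Finset.exists_mem_notMem_of_card_lt_card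
    (s := (D.toSimpleGraph.neighborFinset v).image c) (t := univ) <| by
      rw [Finset.card_univ, Fintype.card_fin]
      exact Finset.card_image_le.trans_lt (by rwa [SimpleGraph.card_neighborFinset_eq_degree])
  have hne (e : D.E) (w : D.V) (he : D.ends e = s(v, w)) (hvw : v ≠ w) : k ≠ c w :=
    fun hcw => hk (Finset.mem_image.2 ⟨w, by simpa using toSimpleGraph_adj e he hvw, hcw.symm⟩)
  refine hD.1 ⟨Function.update c v k, fun e => ?_⟩
  by_cases ht : D.tail e = v
  · have hh : D.head e ≠ v := ht ▸ (hl e).symm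
    rw [ht, Function.update_self, Function.update_of_ne hh]
    exact hne e _ (by rw [ends, ht]) (ht ▸ hl e)
  by_cases hh : D.head e = v
  · rw [hh, Function.update_self, Function.update_of_ne ht]
    exact (hne e _ (by rw [ends, hh, Sym2.eq_swap]) (hh ▸ (hl e).symm)).symm
  rw [Function.update_of_ne ht, Function.update_of_ne hh]
  exact hc e (by simp [Incident, ht, hh])

theorem FourCritical.two_le_card_edges (hD : D.FourCritical) (hl : D.Loopless)
    [Nonempty D.V] : 2 ≤ Fintype.card D.E := by
  have h := Finset.card_nsmul_le_sum univ _ _ fun v _ => hD.three_le_degree hl v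
  rw [D.toSimpleGraph.sum_degrees_eq_twice_card_edges,
    card_edgeFinset_toSimpleGraph hl hD.injective_ends, smul_eq_mul] at h
  have := Finset.card_pos.2 (Finset.univ_nonempty (α := D.V))
  omega

theorem _root_.SimpleGraph.colorable_three_of_not_adj {V : Type*} [Fintype V]
    (S : SimpleGraph V) (hV : Fintype.card V ≤ 5) {a b c d : V} (hab' : ¬ S.Adj a b)
    (hcd' : ¬ S.Adj c d) (hab : a ≠ b) (hac : a ≠ c) (had : a ≠ d) (hbc : b ≠ c) (hbd : b ≠ d)
    (hcd : c ≠ d) : S.Colorable 3 := by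
  classical
  have hpair {x y p q : V} (hpq : ¬ S.Adj p q) (hx : x = p ∨ x = q) (hy : y = p ∨ y = q)
      (hxy : S.Adj x y) : False := by
    rcases hx with rfl | rfl <;> rcases hy with rfl | rfl
    exacts [hxy.ne rfl, hpq hxy, hpq hxy.symm, hxy.ne rfl]
  let col (x : V) : Fin 3 := if x = a ∨ x = b then 0 else if x = c ∨ x = d then 1 else 2
  refine ⟨SimpleGraph.Coloring.mk col fun {x y} hxy hcol => ?_⟩
  by_cases hx1 : x = a ∨ x = b
  · by_cases hy1 : y = a ∨ y = b
    · exact hpair hab' hx1 hy1 hxy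
    · simp only [col, if_pos hx1, if_neg hy1] at hcol
      split_ifs at hcol <;> exact absurd hcol (by decide)
  by_cases hy1 : y = a ∨ y = b
  · simp only [col, if_neg hx1, if_pos hy1] at hcol
    split_ifs at hcol <;> exact absurd hcol (by decide)
  by_cases hx2 : x = c ∨ x = d
  · by_cases hy2 : y = c ∨ y = d
    · exact hpair hcd' hx2 hy2 hxy
    · simp [col, hx1, hy1, hx2, hy2] at hcol
  by_cases hy2 : y = c ∨ y = d
  · simp [col, hx1, hy1, hx2, hy2] at hcol
  -- Two vertices outside `{a, b, c, d}` would make six.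
  simp only [not_or] at hx1 hy1 hx2 hy2
  have := Finset.card_le_univ ({a, b, c, d, x, y} : Finset V)
  rw [Finset.card_insert_of_notMem (by simp [hab, hac, had, Ne.symm hx1.1, Ne.symm hy1.1]),
    Finset.card_insert_of_notMem (by simp [hbc, hbd, Ne.symm hx1.2, Ne.symm hy1.2]),
    Finset.card_insert_of_notMem (by simp [hcd, Ne.symm hx2.1, Ne.symm hy2.1]),
    Finset.card_insert_of_notMem (by simp [Ne.symm hx2.2, Ne.symm hy2.2]),
    Finset.card_pair hxy.ne] at this
  omega

/-- The complement has two edges and maximum degree at most one, so it is a matching of two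
edges, whose ends give two colour classes. -/
theorem _root_.SimpleGraph.colorable_three_of_card_eq_five {V : Type*} [Fintype V]
    [DecidableEq V] (S : SimpleGraph V) [DecidableRel S.Adj] (hV : Fintype.card V = 5)
    (hE : S.edgeFinset.card = 8) (hdeg : ∀ v, 3 ≤ S.degree v) : S.Colorable 3 := by
  have hdegc (v : V) : Sᶜ.degree v + S.degree v = 4 := by
    rw [S.degree_compl, hV]
    have := S.degree_lt_card_verts v
    omega
  have hEc : Sᶜ.edgeFinset.card = 2 := by
    have h := Finset.sum_congr rfl fun v (_ : v ∈ univ) => hdegc v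
    rw [Finset.sum_add_distrib, S.sum_degrees_eq_twice_card_edges,
      Sᶜ.sum_degrees_eq_twice_card_edges, Finset.sum_const, Finset.card_univ, hV, hE,
      smul_eq_mul] at h
    omega
  have huniq {u p q : V} (hp : Sᶜ.Adj u p) (hq : Sᶜ.Adj u q) : p = q := by
    have : (Sᶜ.neighborFinset u).card ≤ 1 := by
      rw [SimpleGraph.card_neighborFinset_eq_degree]
      have := hdegc u
      have := hdeg u
      omega
    exact Finset.card_le_one.1 this p (by simpa using hp) q (by simpa using hq)
  obtain ⟨z, z', hzz', hz⟩ := Finset.card_eq_two.1 hEc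
  induction z using Sym2.ind with | h a b => ?_
  induction z' using Sym2.ind with | h c d => ?_
  have hab : Sᶜ.Adj a b := by
    rw [← SimpleGraph.mem_edgeSet, ← SimpleGraph.mem_edgeFinset, hz]
    simp
  have hcd : Sᶜ.Adj c d := by
    rw [← SimpleGraph.mem_edgeSet, ← SimpleGraph.mem_edgeFinset, hz]
    simp
  refine S.colorable_three_of_not_adj hV.le hab.2 hcd.2 hab.ne ?_ ?_ ?_ ?_ hcd.ne
  · exact fun h => hzz' (by rw [h, huniq hab (h ▸ hcd)])
  · exact fun h => hzz' (by rw [h, huniq hab (h ▸ hcd.symm), Sym2.eq_swap])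
  · exact fun h => hzz' (by rw [h, huniq hab.symm (h ▸ hcd), Sym2.eq_swap])
  · exact fun h => hzz' (by rw [h, huniq hab.symm (h ▸ hcd.symm)])

theorem FourCritical.not_card_eq_five (hD : D.FourCritical) (hl : D.Loopless)
    (hV : Fintype.card D.V = 5) (hE : Fintype.card D.E = 8) : False :=
  hD.1 <| colorable3_of_colorable_toSimpleGraph hl <|
    D.toSimpleGraph.colorable_three_of_card_eq_five hV
      (by rw [card_edgeFinset_toSimpleGraph hl hD.injective_ends, hE]) (hD.three_le_degree hl)

theorem iso_of_ends_eq {G H : MultiGraph} (f : G.V ≃ H.V) (g : G.E ≃ H.E)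
    (h : ∀ e, H.ends (g e) = Sym2.map f (G.ends e)) : Iso G H :=
  ⟨f, g, fun e => Sym2.eq_iff.1 (h e)⟩

theorem iso_of_card_edges_eq_choose {G H : MultiGraph} (hG : G.Loopless) (hH : H.Loopless)
    (hGi : Function.Injective G.ends) (hHi : Function.Injective H.ends)
    (hV : Fintype.card G.V = Fintype.card H.V)
    (hGE : Fintype.card G.E = (Fintype.card G.V).choose 2)
    (hHE : Fintype.card H.E = (Fintype.card H.V).choose 2) : Iso G H := by
  classical
  let f := Fintype.equivOfCardEq hV
  have hsurj (z : Sym2 H.V) (hz : ¬ z.IsDiag) : ∃ e, H.ends e = z := by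
    let F (e : H.E) : {z : Sym2 H.V // ¬ z.IsDiag} := ⟨H.ends e, Sym2.mk_isDiag_iff.not.2 (hH e)⟩
    have hF : Function.Bijective F := (Fintype.bijective_iff_injective_and_card F).2
      ⟨fun e e' h => hHi (congrArg Subtype.val h), by rw [Sym2.card_subtype_not_diag, hHE]⟩
    obtain ⟨e, he⟩ := hF.2 ⟨z, hz⟩
    exact ⟨e, congrArg Subtype.val he⟩
  choose g hg using fun e => hsurj (Sym2.map f (G.ends e))
    ((Sym2.isDiag_map f.injective).not.2 (Sym2.mk_isDiag_iff.not.2 (hG e)))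
  have hgi : Function.Injective g := fun e e' h =>
    hGi (Sym2.map.injective f.injective (by rw [← hg, ← hg, h]))
  exact iso_of_ends_eq f (Equiv.ofBijective g ((Fintype.bijective_iff_injective_and_card g).2
    ⟨hgi, by rw [hGE, hHE, hV]⟩)) hg

theorem loopless_K4 : K4.Loopless := by
  unfold Loopless
  decide

theorem injective_ends_K4 : Function.Injective K4.ends := by decide

theorem FourCritical.iso_K4 (hD : D.FourCritical) (hl : D.Loopless) (hV : Fintype.card D.V = 4)
    (hE : Fintype.card D.E = 6) : Iso D K4 :=
  iso_of_card_edges_eq_choose hl loopless_K4 hD.injective_ends injective_ends_K4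
    (by rw [hV]; rfl) (by rw [hE, hV]; rfl) rfl

end MultiGraph

open MultiGraph in
/-- For a connected plane multigraph `G` with dual `G*`: `G` is
`ℤ/3`-flow-critical iff `G*` is 4-critical.  Consequently (via Euler's formula
and the bound `|E| ≥ (5/3)|V|`), every `n`-vertex 4-critical loopless planar
graph other than `K₄` has at most `2.5 (n - 2)` edges. -/
theorem flowCritical_iff_dual_fourCritical :
    (∀ P : PlaneDualPair, P.G.FlowCritical (ZMod 3) ↔ FourCritical P.D) ∧
    (∀ P : PlaneDualPair, FourCritical P.D →
      (∀ e : P.D.E, P.D.tail e ≠ P.D.head e) → ¬ Iso P.D K4 →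
      2 * Fintype.card P.D.E + 10 ≤ 5 * Fintype.card P.D.V) := by
  refine ⟨PlaneDualPair.flowCritical_iff_fourCritical, fun P hD hl hK4 => ?_⟩
  have hcard : Fintype.card P.G.E = Fintype.card P.D.E := Fintype.card_congr P.eEquiv
  have : Nonempty P.D.V := P.connD.1
  have hE := hD.two_le_card_edges hl
  have := P.euler
  rcases (P.flowCritical_iff_fourCritical.2 hD).five_mul_card_le_three_mul_card_or
    (hcard ▸ hE) with h | ⟨hV, hE'⟩ | ⟨hV, hE'⟩
  · omega
  · exact absurd (hD.iso_K4 hl (by omega) (by omega)) hK4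
  · exact (hD.not_card_eq_five hl (by omega) (by omega)).elim
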